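/- Let A be a *local Noetherian ℤ-graded commutative ring with unique *maximal ideal 𝒩, and let M be a nonzero finitely generated graded A-module such that 𝒩 is the only graded prime containing Ann_A(M). Then for each integer j the component M_j is an Artinian A₀-module with ℓ_{A₀}(M_j) ≤ *ℓ_A(M). If moreover there is a homogeneous element of degree 1 in A ∖ 𝒩, then ℓ_{A₀}(M_j) = *ℓ_A(M) for every j. -/

import Mathlib

open DirectSum

section
variable {A M : Type*} [CommRing A] [AddCommGroup M] [Module A M]

/-- The length of a module, as the supremum of lengths of strict chains of submodules. -/
noncomputable def moduleLength (R : Type*) [Ring R] (N : Type*) [AddCommGroup N]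
    [Module R N] : ℕ∞ :=
  ⨆ (n : ℕ) (c : Fin (n + 1) → Submodule R N) (_ : StrictMono c), (n : ℕ∞)

/-- A submodule of a graded module is graded if it is stable under taking homogeneous
components. -/
def IsGradedSubmodule (ℳ : ℤ → AddSubgroup M) [DirectSum.Decomposition ℳ]
    (N : Submodule A M) : Prop :=
  ∀ (i : ℤ) (m : M), m ∈ N → (DirectSum.decompose ℳ m i : M) ∈ N

/-- The *length of a graded module. -/
noncomputable def starLength (A : Type*) [CommRing A] {M : Type*} [AddCommGroup M] [Module A M]
    (ℳ : ℤ → AddSubgroup M) [DirectSum.Decomposition ℳ] : ℕ∞ :=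
  ⨆ (n : ℕ) (c : Fin (n + 1) → Submodule A M) (_ : StrictMono c)
    (_ : ∀ i, IsGradedSubmodule ℳ (c i)), (n : ℕ∞)

variable (𝒜 : ℤ → AddSubgroup A) (ℳ : ℤ → AddSubgroup M)
variable [GradedRing 𝒜] [SetLike.GradedSMul 𝒜 ℳ]

/-- The degree-`j` component of a graded module is a module over the degree-zero subring. -/
noncomputable instance gradeZeroModule (j : ℤ) : Module (𝒜 0) (ℳ j) where
  smul a m := ⟨(a : A) • (m : M), by
    have h := SetLike.GradedSMul.smul_mem a.2 m.2
    rwa [show (0 : ℤ) +ᵥ j = j from zero_add j] at h⟩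
  one_smul m := by
    ext; show ((1 : 𝒜 0) : A) • (m : M) = m
    rw [SetLike.GradeZero.coe_one, one_smul]
  mul_smul a b m := by
    ext; show ((a * b : 𝒜 0) : A) • (m : M) = _
    rw [SetLike.GradeZero.coe_mul]; exact mul_smul _ _ _
  smul_zero a := by ext; exact smul_zero _
  smul_add a m n := by ext; exact smul_add _ _ _
  add_smul a b m := by
    ext; show ((a + b : 𝒜 0) : A) • (m : M) = _
    rw [AddMemClass.coe_add]; exact add_smul _ _ _
  zero_smul m := by ext; exact zero_smul A _

end

/-!
For an `A₀`-submodule `W` of `M_j`, the degree-`j` part of the graded submodule `A • W` is `W`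
again. Hence `W ↦ A • W` is a strictly monotone map into graded submodules of `M`, which gives
`ℓ_{A₀}(M_j) ≤ *ℓ_A(M)` and makes `M_j` Noetherian. A homogeneous element outside `𝒩` spans a
homogeneous ideal not contained in `𝒩`, so it is a unit. Thus `𝒩 ∩ A₀` is a maximal ideal of `A₀`,
and a unit of degree `1` shifts any homogeneous element into degree `j`, so that `N ↦ N_j` is
strictly monotone on graded submodules: this is the reverse inequality. Finally `Ann M` is
homogeneous, so its radical is the intersection of the graded primes containing it, namely `𝒩`.
Hence `(𝒩 ∩ A₀)ⁿ` kills `M_j` for some `n`, and a Noetherian module killed by a power of a maximal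
ideal is Artinian.
-/

theorem isArtinian_of_isTorsionBySet_isMaximal {R V : Type*} [CommRing R] [AddCommGroup V]
    [Module R V] [Module.Finite R V] (𝔪 : Ideal R) [𝔪.IsMaximal]
    (h : Module.IsTorsionBySet R V 𝔪) : IsArtinian R V := by
  let := Ideal.Quotient.field 𝔪
  let := h.module
  have : IsScalarTower R (R ⧸ 𝔪) V := h.isScalarTower
  have : Module.Finite (R ⧸ 𝔪) V := .of_restrictScalars_finite R _ V
  exact isArtinian_of_surjective_algebraMap (R := R ⧸ 𝔪) Ideal.Quotient.mk_surjective

theorem isArtinian_of_pow_le_annihilator {R V : Type*} [CommRing R] [AddCommGroup V]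
    [Module R V] [IsNoetherian R V] (𝔪 : Ideal R) [𝔪.IsMaximal] {n : ℕ}
    (h : 𝔪 ^ n ≤ Module.annihilator R V) : IsArtinian R V := by
  induction n generalizing V with
  | zero =>
    rw [pow_zero, Ideal.one_eq_top, top_le_iff, Module.annihilator_eq_top_iff] at h
    infer_instance
  | succ n ih =>
    rw [isArtinian_iff_submodule_quotient (𝔪 • ⊤ : Submodule R V)]
    refine ⟨ih ?_, isArtinian_of_isTorsionBySet_isMaximal 𝔪
      (Module.isTorsionBySet_quotient_ideal_smul V 𝔪)⟩
    change 𝔪 ^ n ≤ Submodule.annihilator _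
    rwa [Submodule.le_annihilator_iff, ← Submodule.mul_smul, ← pow_succ,
      ← Submodule.le_annihilator_iff, Submodule.annihilator_top]

open Submodule

section GradedRing

variable {A : Type*} [CommRing A] (𝒜 : ℤ → AddSubgroup A) [GradedRing 𝒜]

theorem mem_graded_neg_of_mul_eq_one {a b : A} {e : ℤ} (ha : a ∈ 𝒜 e) (hba : b * a = 1) :
    b ∈ 𝒜 (-e) := by
  have h := coe_decompose_mul_add_of_right_mem 𝒜 (i := -e) (a := b) ha
  rw [hba, neg_add_cancel, decompose_of_mem_same 𝒜 (SetLike.one_mem_graded 𝒜)] at h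
  have hb : (decompose 𝒜 b (-e) : A) = b :=
    calc _ = decompose 𝒜 b (-e) * (a * b) := by rw [mul_comm a b, hba, mul_one]
      _ = b := by rw [← mul_assoc, ← h, one_mul]
  exact hb ▸ SetLike.coe_mem _

theorem Units.zpow_mem_graded {u : Aˣ} (hu : (u : A) ∈ 𝒜 1) (k : ℤ) :
    ((u ^ k : Aˣ) : A) ∈ 𝒜 k := by
  induction k with
  | zero => simpa using SetLike.one_mem_graded 𝒜
  | succ k ih =>
    rw [zpow_add_one, Units.val_mul]
    exact SetLike.mul_mem_graded ih hu
  | pred k ih =>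
    rw [zpow_sub_one, Units.val_mul, sub_eq_add_neg]
    exact SetLike.mul_mem_graded ih (mem_graded_neg_of_mul_eq_one 𝒜 hu u.inv_mul)

variable {𝒩 : Ideal A}

theorem isUnit_of_mem_graded_of_notMem
    (hlocal : ∀ I : Ideal A, I.IsHomogeneous 𝒜 → I ≠ ⊤ → I ≤ 𝒩) {a : A} {e : ℤ} (ha : a ∈ 𝒜 e)
    (hna : a ∉ 𝒩) : IsUnit a := by
  rw [← Ideal.span_singleton_eq_top]
  by_contra h
  exact hna (hlocal _ (Ideal.homogeneous_span 𝒜 {a} (by rintro _ rfl; exact ⟨e, ha⟩)) h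
    (Ideal.subset_span rfl))

theorem isMaximal_comap_algebraMap (h𝒩 : 𝒩 ≠ ⊤)
    (hlocal : ∀ I : Ideal A, I.IsHomogeneous 𝒜 → I ≠ ⊤ → I ≤ 𝒩) :
    (𝒩.comap (algebraMap (𝒜 0) A)).IsMaximal := by
  refine Ideal.isMaximal_iff.mpr ⟨fun h => h𝒩 ((Ideal.eq_top_iff_one _).mpr (by simpa using h)),
    fun J x _ hx hxJ => ?_⟩
  obtain ⟨u, hu⟩ := isUnit_of_mem_graded_of_notMem 𝒜 hlocal x.2 hx
  have hinv : (↑u⁻¹ : A) ∈ 𝒜 0 := by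
    simpa using mem_graded_neg_of_mul_eq_one 𝒜 x.2 (hu ▸ u.inv_mul)
  have hx_unit : (⟨_, hinv⟩ : 𝒜 0) * x = 1 := Subtype.ext (by simp [← hu])
  exact hx_unit ▸ J.mul_mem_left _ hxJ

end GradedRing

section GradedModule

variable {A M : Type*} [CommRing A] [AddCommGroup M] [Module A M]

theorem DirectSum.coe_decompose_smul_of_mem (𝒜 : ℤ → AddSubgroup A) (ℳ : ℤ → AddSubgroup M)
    [GradedRing 𝒜] [DirectSum.Decomposition ℳ] [SetLike.GradedSMul 𝒜 ℳ]
    (r : A) {m : M} {e : ℤ} (hm : m ∈ ℳ e) (i : ℤ) :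
    (decompose ℳ (r • m) i : M) = (decompose 𝒜 r (i - e) : A) • m := by
  induction r using DirectSum.Decomposition.inductionOn 𝒜 with
  | zero => simp
  | @homogeneous d r =>
    have hrm : (r : A) • m ∈ ℳ (d + e) := SetLike.GradedSMul.smul_mem r.2 hm
    by_cases hi : i = d + e
    · rw [hi, decompose_of_mem_same ℳ hrm, add_sub_cancel_right, decompose_coe, of_eq_same]
    · rw [decompose_of_mem_ne ℳ hrm (Ne.symm hi), decompose_of_mem_ne 𝒜 r.2 (by omega),
        zero_smul]
  | add r r' hr hr' => rw [add_smul, decompose_add, add_apply, AddMemClass.coe_add, hr, hr',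
      decompose_add, add_apply, AddMemClass.coe_add, add_smul]

theorem isGradedSubmodule_span (𝒜 : ℤ → AddSubgroup A) {ℳ : ℤ → AddSubgroup M}
    [GradedRing 𝒜] [DirectSum.Decomposition ℳ] [SetLike.GradedSMul 𝒜 ℳ]
    {s : Set M} (hs : ∀ y ∈ s, ∃ e, y ∈ ℳ e) : IsGradedSubmodule ℳ (span A s) := by
  intro i x hx
  obtain ⟨n, f, g, rfl⟩ := mem_span_set'.mp hx
  rw [decompose_sum, DFinsupp.finsetSum_apply, AddSubmonoidClass.coe_finsetSum]
  refine sum_mem fun k _ => ?_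
  obtain ⟨e, he⟩ := hs _ (g k).2
  rw [coe_decompose_smul_of_mem 𝒜 ℳ (f k) he]
  exact smul_mem _ _ (subset_span (g k).2)

theorem isHomogeneous_annihilator (𝒜 : ℤ → AddSubgroup A) (ℳ : ℤ → AddSubgroup M)
    [GradedRing 𝒜] [DirectSum.Decomposition ℳ] [SetLike.GradedSMul 𝒜 ℳ] :
    (Module.annihilator A M).IsHomogeneous 𝒜 := by
  intro i a ha
  rw [Module.mem_annihilator] at ha ⊢
  intro m
  induction m using DirectSum.Decomposition.inductionOn ℳ with
  | zero => exact smul_zero _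
  | @homogeneous e m =>
    have h := coe_decompose_smul_of_mem 𝒜 ℳ a m.2 (i + e)
    rwa [ha, add_sub_cancel_right, decompose_zero, DirectSum.zero_apply, ZeroMemClass.coe_zero,
      eq_comm] at h
  | add m m' hm hm' => rw [smul_add, hm, hm', add_zero]

variable (𝒜 : ℤ → AddSubgroup A) (ℳ : ℤ → AddSubgroup M)
variable [GradedRing 𝒜] [SetLike.GradedSMul 𝒜 ℳ]

def Submodule.component (N : Submodule A M) (j : ℤ) : Submodule (𝒜 0) (ℳ j) where
  carrier := {x | (x : M) ∈ N}
  add_mem' := N.add_mem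
  zero_mem' := N.zero_mem
  smul_mem' c _ hx := N.smul_mem (c : A) hx

theorem Submodule.mem_component {N : Submodule A M} {j : ℤ} {x : ℳ j} :
    x ∈ N.component 𝒜 ℳ j ↔ (x : M) ∈ N := Iff.rfl

theorem comap_annihilator_le_annihilator_component (j : ℤ) :
    (Module.annihilator A M).comap (algebraMap (𝒜 0) A) ≤ Module.annihilator (𝒜 0) (ℳ j) :=
  fun _ ha => Module.mem_annihilator.mpr fun x => Subtype.ext (Module.mem_annihilator.mp ha x)

variable [DirectSum.Decomposition ℳ]

theorem Submodule.component_span_image {j : ℤ} (W : Submodule (𝒜 0) (ℳ j)) :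
    (span A (Subtype.val '' (W : Set (ℳ j)))).component 𝒜 ℳ j = W := by
  refine le_antisymm (fun x hx => ?_) fun x hx => subset_span ⟨x, hx, rfl⟩
  obtain ⟨l, hl, hlx⟩ := (Finsupp.mem_span_image_iff_linearCombination A).mp hx
  have hx_eq : x = ∑ w ∈ l.support, decompose 𝒜 (l w) 0 • w := by
    ext
    conv_lhs => rw [← decompose_of_mem_same ℳ x.2, ← hlx]
    rw [Finsupp.linearCombination_apply, Finsupp.sum, decompose_sum, DFinsupp.finsetSum_apply,
      AddSubmonoidClass.coe_finsetSum, AddSubmonoidClass.coe_finsetSum]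
    refine Finset.sum_congr rfl fun w _ => ?_
    rw [coe_decompose_smul_of_mem 𝒜 ℳ _ w.2, sub_self]
    rfl
  rw [hx_eq]
  exact sum_mem fun w hw => W.smul_mem _ (hl hw)

theorem strictMono_span_image (j : ℤ) :
    StrictMono fun W : Submodule (𝒜 0) (ℳ j) => span A (Subtype.val '' (W : Set (ℳ j))) :=
  Monotone.strictMono_of_injective (fun _ _ h => span_mono (Set.image_mono h))
    (Function.LeftInverse.injective (g := fun N : Submodule A M => N.component 𝒜 ℳ j)
      (component_span_image 𝒜 ℳ))

theorem isNoetherian_component [IsNoetherian A M] (j : ℤ) : IsNoetherian (𝒜 0) (ℳ j) := by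
  rw [isNoetherian_iff']
  exact (strictMono_span_image 𝒜 ℳ j).wellFoundedGT

theorem moduleLength_le_starLength (j : ℤ) :
    moduleLength (𝒜 0) (ℳ j) ≤ starLength A ℳ :=
  iSup₂_le fun n c => iSup_le fun hc =>
    le_iSup₂_of_le n _ <| le_iSup₂_of_le ((strictMono_span_image 𝒜 ℳ j).comp hc)
      (fun _ => isGradedSubmodule_span 𝒜 (by rintro _ ⟨x, -, rfl⟩; exact ⟨j, x.2⟩)) le_rfl

theorem Submodule.component_lt_component {u : Aˣ} (hu : (u : A) ∈ 𝒜 1) (j : ℤ)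
    {N N' : Submodule A M} (hN' : IsGradedSubmodule ℳ N') (h : N < N') :
    N.component 𝒜 ℳ j < N'.component 𝒜 ℳ j := by
  classical
  obtain ⟨hle, x, hxN', hxN⟩ := SetLike.lt_iff_le_and_exists.mp h
  obtain ⟨d, hd⟩ : ∃ d, (decompose ℳ x d : M) ∉ N := by
    by_contra! hall
    exact hxN (sum_support_decompose ℳ x ▸ sum_mem fun d _ => hall d)
  have hy : ((u ^ (j - d) : Aˣ) : A) • (decompose ℳ x d : M) ∈ ℳ j := by
    simpa using SetLike.GradedSMul.smul_mem (Units.zpow_mem_graded 𝒜 hu (j - d))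
      (decompose ℳ x d).2
  refine SetLike.lt_iff_le_and_exists.mpr ⟨fun _ hx => hle hx, ⟨_, hy⟩, ?_, ?_⟩
  · exact (mem_component 𝒜 ℳ).mpr (N'.smul_mem _ (hN' d x hxN'))
  · exact (smul_mem_iff' (p := N) (u ^ (j - d))).not.mpr hd

theorem starLength_le_moduleLength {u : Aˣ} (hu : (u : A) ∈ 𝒜 1) (j : ℤ) :
    starLength A ℳ ≤ moduleLength (𝒜 0) (ℳ j) :=
  iSup₂_le fun n C => iSup₂_le fun hC hgr =>
    le_iSup₂_of_le n (fun i => (C i).component 𝒜 ℳ j) <|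
      le_iSup_of_le (fun _ i' h => component_lt_component 𝒜 ℳ hu j (hgr i') (hC h)) le_rfl

theorem isArtinian_component [IsNoetherianRing A] [Module.Finite A M] {𝒩 : Ideal A}
    (h𝒩 : 𝒩 ≠ ⊤) (hlocal : ∀ I : Ideal A, I.IsHomogeneous 𝒜 → I ≠ ⊤ → I ≤ 𝒩)
    (hsupp : ∀ 𝔭 : Ideal A, 𝔭.IsPrime → 𝔭.IsHomogeneous 𝒜 →
      Module.annihilator A M ≤ 𝔭 → 𝔭 = 𝒩) (j : ℤ) :
    IsArtinian (𝒜 0) (ℳ j) := by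
  have hrad : 𝒩 ≤ (Module.annihilator A M).radical := by
    rw [(isHomogeneous_annihilator 𝒜 ℳ).radical_eq]
    exact le_sInf fun 𝔭 ⟨h𝔭, hle, hprime⟩ => (hsupp 𝔭 hprime h𝔭 hle).ge
  obtain ⟨n, hn⟩ := Ideal.exists_pow_le_of_le_radical_of_fg hrad (IsNoetherian.noetherian 𝒩)
  have := isMaximal_comap_algebraMap 𝒜 h𝒩 hlocal
  have := isNoetherian_component 𝒜 ℳ j
  exact isArtinian_of_pow_le_annihilator (𝒩.comap (algebraMap (𝒜 0) A)) <|
    (Ideal.le_comap_pow _ n).trans <|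
      (Ideal.comap_mono hn).trans (comap_annihilator_le_annihilator_component 𝒜 ℳ j)

end GradedModule

section
variable {A M : Type*} [CommRing A] [AddCommGroup M] [Module A M]
variable (𝒜 : ℤ → AddSubgroup A) (ℳ : ℤ → AddSubgroup M)
variable [GradedRing 𝒜] [SetLike.GradedSMul 𝒜 ℳ]

theorem stmt_12 [DirectSum.Decomposition ℳ] [IsNoetherianRing A] [Module.Finite A M]
    (𝒩 : Ideal A) (h𝒩top : 𝒩 ≠ ⊤)
    (hlocal : ∀ I : Ideal A, Ideal.IsHomogeneous 𝒜 I → I ≠ ⊤ → I ≤ 𝒩)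
    (hsupp : ∀ 𝔭 : Ideal A, 𝔭.IsPrime → Ideal.IsHomogeneous 𝒜 𝔭 →
      Module.annihilator A M ≤ 𝔭 → 𝔭 = 𝒩) :
    (∀ j : ℤ, IsArtinian (𝒜 0) (ℳ j) ∧ moduleLength (𝒜 0) (ℳ j) ≤ starLength A ℳ) ∧
      ((∃ a ∈ 𝒜 1, a ∉ 𝒩) →
        ∀ j : ℤ, moduleLength (𝒜 0) (ℳ j) = starLength A ℳ) := by
  refine ⟨fun j => ⟨isArtinian_component 𝒜 ℳ h𝒩top hlocal hsupp j,
    moduleLength_le_starLength 𝒜 ℳ j⟩, ?_⟩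
  rintro ⟨a, ha, hna⟩ j
  obtain ⟨u, rfl⟩ := isUnit_of_mem_graded_of_notMem 𝒜 hlocal ha hna
  exact (moduleLength_le_starLength 𝒜 ℳ j).antisymm (starLength_le_moduleLength 𝒜 ℳ ha j)

end
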